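/- Let n ≥ 1, a ∈ ℝⁿ, d ∈ ℝ, suppose {a_i : i ∈ [n]} forms a minimal cover of d, and set Δ := ∑_{i=1}^n a_i − d, d_i := a_i − Δ. Let S = {(x,y) ∈ [0,1]ⁿ × [0,1]ⁿ : ∑_{i=1}^n a_i x_i y_i ≥ d} and R = {(x,y) ∈ ℝ₊ⁿ × ℝ₊ⁿ : ∑_{i=1}^n (√a_i/(√a_i − √d_i))(√(x_i y_i) − 1) ≥ −1}. Then conv(S) ⊆ R ∩ ([0,1]ⁿ × [0,1]ⁿ). -/
import Mathlib

/-- Cauchy–Schwarz / concavity of √(xy): for nonnegative data,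
`a·√(x₁y₁) + b·√(x₂y₂) ≤ √((a x₁ + b x₂)(a y₁ + b y₂))`. -/
lemma sqrt_prod_concave (x₁ y₁ x₂ y₂ u v : ℝ) (hx₁ : 0 ≤ x₁) (hy₁ : 0 ≤ y₁)
    (hx₂ : 0 ≤ x₂) (hy₂ : 0 ≤ y₂) (hu : 0 ≤ u) (hv : 0 ≤ v) :
    u * Real.sqrt (x₁ * y₁) + v * Real.sqrt (x₂ * y₂) ≤
      Real.sqrt ((u * x₁ + v * x₂) * (u * y₁ + v * y₂)) := by
  have h1 : Real.sqrt (x₁ * y₁) * Real.sqrt (x₂ * y₂) =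
      Real.sqrt (x₁ * y₂) * Real.sqrt (x₂ * y₁) := by
    rw [← Real.sqrt_mul (by positivity), ← Real.sqrt_mul (by positivity)]
    ring_nf
  have h2 : 2 * (Real.sqrt (x₁ * y₂) * Real.sqrt (x₂ * y₁)) ≤ x₁ * y₂ + x₂ * y₁ := by
    nlinarith [sq_nonneg (Real.sqrt (x₁ * y₂) - Real.sqrt (x₂ * y₁)),
      Real.sq_sqrt (mul_nonneg hx₁ hy₂), Real.sq_sqrt (mul_nonneg hx₂ hy₁)]
  rw [show u * Real.sqrt (x₁ * y₁) + v * Real.sqrt (x₂ * y₂) =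
      u * Real.sqrt (x₁ * y₁) + v * Real.sqrt (x₂ * y₂) from rfl]
  apply Real.le_sqrt_of_sq_le
  have s1 := Real.sq_sqrt (mul_nonneg hx₁ hy₁)
  have s2 := Real.sq_sqrt (mul_nonneg hx₂ hy₂)
  have h3 : 2 * (u * v) * (Real.sqrt (x₁ * y₁) * Real.sqrt (x₂ * y₂)) ≤
      u * v * (x₁ * y₂ + x₂ * y₁) := by
    rw [h1]
    nlinarith [mul_le_mul_of_nonneg_left h2 (mul_nonneg hu hv)]
  have e1 : u ^ 2 * Real.sqrt (x₁ * y₁) ^ 2 = u ^ 2 * (x₁ * y₁) := by rw [s1]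
  have e2 : v ^ 2 * Real.sqrt (x₂ * y₂) ^ 2 = v ^ 2 * (x₂ * y₂) := by rw [s2]
  nlinarith [h3, e1, e2]

/-- Key per-coordinate estimate: if `0 ≤ D < A`, `0 ≤ u ≤ 1` and `D ≤ A u²`, then
`√A/(√A−√D)·(1−u) ≤ A(1−u²)/(A−D)`. -/
lemma key_estimate (A D u : ℝ) (hA : 0 < A) (hD0 : 0 ≤ D) (hDA : D < A)
    (hu0 : 0 ≤ u) (hu1 : u ≤ 1) (hlo : D ≤ A * u ^ 2) :
    Real.sqrt A / (Real.sqrt A - Real.sqrt D) * (1 - u) ≤ A * (1 - u ^ 2) / (A - D) := by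
  set sA := Real.sqrt A with hsA
  set sD := Real.sqrt D with hsD
  have hA2 : sA ^ 2 = A := Real.sq_sqrt hA.le
  have hD2 : sD ^ 2 = D := Real.sq_sqrt hD0
  have hsA0 : 0 < sA := Real.sqrt_pos.mpr hA
  have hsD0 : 0 ≤ sD := Real.sqrt_nonneg D
  have hlt : sD < sA := Real.sqrt_lt_sqrt hD0 hDA
  have hden1 : 0 < sA - sD := by linarith
  have hden2 : 0 < A - D := by linarith
  have huD : sD ≤ sA * u := by
    have : sD ≤ Real.sqrt (A * u ^ 2) := Real.sqrt_le_sqrt hlo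
    rwa [Real.sqrt_mul hA.le, Real.sqrt_sq hu0, ← hsA] at this
  rw [div_mul_eq_mul_div, div_le_div_iff₀ hden1 hden2, ← hA2, ← hD2]
  nlinarith [mul_nonneg (mul_nonneg (mul_nonneg hsA0.le (sub_nonneg.2 hu1))
      (sub_nonneg.2 hlt.le)) (sub_nonneg.2 huD)]

/-- For a minimal cover, with Δ := ∑ a_i − d and d_i := a_i − Δ,
conv(S) ⊆ R ∩ ([0,1]ⁿ × [0,1]ⁿ), where R is the region cut out by the bilinear
cover inequality on the nonnegative orthant. -/
theorem stmt_4 (n : ℕ) (hn : 1 ≤ n) (a : Fin n → ℝ) (d : ℝ)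
    (hpos : ∀ i, 0 < a i) (hd : 0 < d)
    (hsum : d < ∑ i, a i)
    (hmin : ∀ K : Finset (Fin n), K ⊂ Finset.univ → ∑ i ∈ K, a i ≤ d)
    (Δ : ℝ) (hΔ : Δ = (∑ i, a i) - d)
    (S R : Set ((Fin n → ℝ) × (Fin n → ℝ)))
    (hS : S = {p : (Fin n → ℝ) × (Fin n → ℝ) |
      (∀ i, p.1 i ∈ Set.Icc (0 : ℝ) 1) ∧ (∀ i, p.2 i ∈ Set.Icc (0 : ℝ) 1) ∧
      d ≤ ∑ i, a i * (p.1 i * p.2 i)})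
    (hR : R = {p : (Fin n → ℝ) × (Fin n → ℝ) |
      (∀ i, 0 ≤ p.1 i) ∧ (∀ i, 0 ≤ p.2 i) ∧
      -1 ≤ ∑ i, Real.sqrt (a i) / (Real.sqrt (a i) - Real.sqrt (a i - Δ))
              * (Real.sqrt (p.1 i * p.2 i) - 1)}) :
    convexHull ℝ S ⊆ R ∩ {p : (Fin n → ℝ) × (Fin n → ℝ) |
      (∀ i, p.1 i ∈ Set.Icc (0 : ℝ) 1) ∧ (∀ i, p.2 i ∈ Set.Icc (0 : ℝ) 1)} := by
  have hΔpos : 0 < Δ := by rw [hΔ]; linarith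
  -- each dᵢ = aᵢ − Δ is nonnegative
  have hdi : ∀ i, 0 ≤ a i - Δ := by
    intro i
    have hK : ∑ j ∈ Finset.univ.erase i, a j ≤ d :=
      hmin _ (Finset.erase_ssubset (Finset.mem_univ i))
    have hsplit : a i + ∑ j ∈ Finset.univ.erase i, a j = ∑ j, a j :=
      Finset.add_sum_erase _ _ (Finset.mem_univ i)
    rw [hΔ]; linarith
  set c : Fin n → ℝ := fun i =>
    Real.sqrt (a i) / (Real.sqrt (a i) - Real.sqrt (a i - Δ)) with hc
  have hcnn : ∀ i, 0 ≤ c i := by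
    intro i
    have hlt : Real.sqrt (a i - Δ) < Real.sqrt (a i) :=
      Real.sqrt_lt_sqrt (hdi i) (by linarith)
    exact div_nonneg (Real.sqrt_nonneg _) (by linarith)
  apply convexHull_min
  · -- S ⊆ R ∩ box
    intro p hp
    rw [hS] at hp
    obtain ⟨hx, hy, hineq⟩ := hp
    refine ⟨?_, hx, hy⟩
    rw [hR]
    refine ⟨fun i => (hx i).1, fun i => (hy i).1, ?_⟩
    -- per-coordinate lower bound: a i - Δ ≤ a i * (x i * y i)
    have hxy01 : ∀ i, p.1 i * p.2 i ∈ Set.Icc (0 : ℝ) 1 := fun i =>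
      ⟨mul_nonneg (hx i).1 (hy i).1,
        mul_le_one₀ (hx i).2 (hy i).1 (hy i).2⟩
    have hcoordlo : ∀ i, a i - Δ ≤ a i * (p.1 i * p.2 i) := by
      intro i
      have h1 : ∑ j ∈ Finset.univ.erase i, a j * (p.1 j * p.2 j) ≤
          ∑ j ∈ Finset.univ.erase i, a j := by
        apply Finset.sum_le_sum
        intro j _
        nlinarith [(hpos j).le, (hxy01 j).2, hpos j]
      have hsplit1 : a i * (p.1 i * p.2 i) +
          ∑ j ∈ Finset.univ.erase i, a j * (p.1 j * p.2 j)
          = ∑ j, a j * (p.1 j * p.2 j) :=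
        Finset.add_sum_erase _ (fun j => a j * (p.1 j * p.2 j)) (Finset.mem_univ i)
      have hsplit2 : a i + ∑ j ∈ Finset.univ.erase i, a j = ∑ j, a j :=
        Finset.add_sum_erase _ _ (Finset.mem_univ i)
      rw [hΔ] at *
      linarith
    have hterm : ∀ i, a i * (p.1 i * p.2 i) - a i ≤
        Δ * (c i * (Real.sqrt (p.1 i * p.2 i) - 1)) := by
      intro i
      have hu0 : 0 ≤ Real.sqrt (p.1 i * p.2 i) := Real.sqrt_nonneg _
      have hu1 : Real.sqrt (p.1 i * p.2 i) ≤ 1 := by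
        rw [show (1 : ℝ) = Real.sqrt 1 by simp]
        exact Real.sqrt_le_sqrt (hxy01 i).2
      have hu2 : Real.sqrt (p.1 i * p.2 i) ^ 2 = p.1 i * p.2 i :=
        Real.sq_sqrt (hxy01 i).1
      have hceq : c i = Real.sqrt (a i) / (Real.sqrt (a i) - Real.sqrt (a i - Δ)) := by
        simp only [hc]
      have hkey := key_estimate (a i) (a i - Δ) (Real.sqrt (p.1 i * p.2 i))
        (hpos i) (hdi i) (by linarith) hu0 hu1 (by rw [hu2]; linarith [hcoordlo i])
      rw [show a i - (a i - Δ) = Δ by ring] at hkey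
      rw [le_div_iff₀ hΔpos] at hkey
      have hmul : a i * Real.sqrt (p.1 i * p.2 i) ^ 2 = a i * (p.1 i * p.2 i) := by
        rw [hu2]
      rw [hceq]
      nlinarith [hkey, hmul]
    have hsum2 : d - ∑ i, a i ≤
        Δ * ∑ i, c i * (Real.sqrt (p.1 i * p.2 i) - 1) := by
      rw [Finset.mul_sum]
      calc d - ∑ i, a i ≤ (∑ i, a i * (p.1 i * p.2 i)) - ∑ i, a i := by linarith
        _ = ∑ i, (a i * (p.1 i * p.2 i) - a i) := by rw [Finset.sum_sub_distrib]
        _ ≤ ∑ i, Δ * (c i * (Real.sqrt (p.1 i * p.2 i) - 1)) :=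
            Finset.sum_le_sum fun i _ => hterm i
    nlinarith [hsum2, hΔpos, hΔ]
  · -- convexity of R ∩ box
    rintro p hp q hq u v hu hv huv
    obtain ⟨hpR, hpbox⟩ := hp
    obtain ⟨hqR, hqbox⟩ := hq
    rw [hR] at hpR hqR
    obtain ⟨hp1, hp2, hpI⟩ := hpR
    obtain ⟨hq1, hq2, hqI⟩ := hqR
    have hbox : ∀ w : Fin n → ℝ, ∀ w' : Fin n → ℝ,
        (∀ i, w i ∈ Set.Icc (0:ℝ) 1) → (∀ i, w' i ∈ Set.Icc (0:ℝ) 1) →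
        ∀ i, (u • w + v • w') i ∈ Set.Icc (0:ℝ) 1 := by
      intro w w' hw hw' i
      have h1 := (hw i).1; have h2 := (hw i).2
      have h3 := (hw' i).1; have h4 := (hw' i).2
      constructor
      · simp only [Pi.add_apply, Pi.smul_apply, smul_eq_mul]
        nlinarith
      · simp only [Pi.add_apply, Pi.smul_apply, smul_eq_mul]
        nlinarith
    refine ⟨?_, ?_, ?_⟩
    · rw [hR]
      refine ⟨fun i => (hbox _ _ hpbox.1 hqbox.1 i).1,
        fun i => (hbox _ _ hpbox.2 hqbox.2 i).1, ?_⟩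
      have hconc : ∀ i, u * Real.sqrt (p.1 i * p.2 i) + v * Real.sqrt (q.1 i * q.2 i)
          ≤ Real.sqrt ((u • p + v • q).1 i * (u • p + v • q).2 i) := by
        intro i
        simp only [Prod.fst_add, Prod.snd_add, Prod.smul_fst, Prod.smul_snd,
          Pi.add_apply, Pi.smul_apply, smul_eq_mul]
        exact sqrt_prod_concave _ _ _ _ u v (hp1 i) (hp2 i) (hq1 i) (hq2 i) hu hv
      calc (-1 : ℝ) = u * (-1) + v * (-1) := by linarith
        _ ≤ u * (∑ i, c i * (Real.sqrt (p.1 i * p.2 i) - 1)) +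
            v * (∑ i, c i * (Real.sqrt (q.1 i * q.2 i) - 1)) := by
            have := mul_le_mul_of_nonneg_left hpI hu
            have := mul_le_mul_of_nonneg_left hqI hv
            nlinarith
        _ = ∑ i, (c i * (u * Real.sqrt (p.1 i * p.2 i) +
              v * Real.sqrt (q.1 i * q.2 i) - (u + v))) := by
            rw [Finset.mul_sum, Finset.mul_sum, ← Finset.sum_add_distrib]
            apply Finset.sum_congr rfl
            intro i _
            ring
        _ ≤ ∑ i, c i * (Real.sqrt ((u • p + v • q).1 i * (u • p + v • q).2 i) - 1) := by
            apply Finset.sum_le_sum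
            intro i _
            have := hconc i
            have hci := hcnn i
            rw [huv]
            nlinarith
    · exact fun i => hbox _ _ hpbox.1 hqbox.1 i
    · exact fun i => hbox _ _ hpbox.2 hqbox.2 i
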